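/- arXiv:2305.06323 — 8 statements merged into one kernel-verified Lean document; each statement's English description precedes it below -/
import Mathlib

section
/- For third-order tensors 𝒜 ∈ ℂ^{n×m×p} and ℬ ∈ ℂ^{m×ℓ×p}, bcirc(𝒜 * ℬ) = bcirc(𝒜) · bcirc(ℬ), where * is the T-product; consequently, the T-product is associative. -/
open Matrix Complex Finset Kronecker
open scoped ComplexOrder

/-- The `p × p` circulant matrix with first column `v`. -/
noncomputable def circ (p : ℕ) (v : Fin p → ℂ) : Matrix (Fin p) (Fin p) ℂ :=
  Matrix.of fun j k => v (j - k)

/-- The normalized (unitary) DFT matrix of order `p`, with `ω = exp(-2πi/p)`. -/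
noncomputable def Fp (p : ℕ) : Matrix (Fin p) (Fin p) ℂ :=
  Matrix.of fun j k =>
    Complex.exp (-(2 * Real.pi * Complex.I * (j.val * k.val)) / p) / (Real.sqrt p : ℂ)

/-- Block circulant matrix of a third-order tensor given by its frontal slices. -/
noncomputable def bcirc {n m p : ℕ} (X : Fin p → Matrix (Fin n) (Fin m) ℂ) :
    Matrix (Fin p × Fin n) (Fin p × Fin m) ℂ :=
  Matrix.of fun jr kc => X (jr.1 - kc.1) jr.2 kc.2

/-- Block circulant matrix of an `n × 1 × p` tensor (slices viewed as vectors). -/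
noncomputable def bcircV {n p : ℕ} (X : Fin p → Fin n → ℂ) :
    Matrix (Fin p × Fin n) (Fin p) ℂ :=
  Matrix.of fun jr k => X (jr.1 - k) jr.2

/-- Block diagonal matrix (square-block index first). -/
noncomputable def blockDiagMat {n m p : ℕ} (D : Fin p → Matrix (Fin n) (Fin m) ℂ) :
    Matrix (Fin p × Fin n) (Fin p × Fin m) ℂ :=
  Matrix.of fun jr kc => if jr.1 = kc.1 then D jr.1 jr.2 kc.2 else 0

/-- Block diagonal matrix whose blocks are column vectors. -/
noncomputable def blockDiagVec {n p : ℕ} (x : Fin p → Fin n → ℂ) :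
    Matrix (Fin p × Fin n) (Fin p) ℂ :=
  Matrix.of fun jr k => if jr.1 = k then x k jr.2 else 0

/-- The T-product of two third-order tensors (slicewise cyclic convolution). -/
noncomputable def tmul {n m l p : ℕ} (A : Fin p → Matrix (Fin n) (Fin m) ℂ)
    (B : Fin p → Matrix (Fin m) (Fin l) ℂ) : Fin p → Matrix (Fin n) (Fin l) ℂ :=
  fun i => ∑ j, A (i - j) * B j

/-- The identity tensor: first frontal slice is `I_n`, the others are zero. -/
noncomputable def tId (n p : ℕ) [NeZero p] : Fin p → Matrix (Fin n) (Fin n) ℂ :=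
  fun i => if i = 0 then 1 else 0

/-- Conjugate T-transpose of a tensor. -/
noncomputable def tH {n m p : ℕ} (X : Fin p → Matrix (Fin n) (Fin m) ℂ) :
    Fin p → Matrix (Fin m) (Fin n) ℂ :=
  fun i => (X (-i))ᴴ

/-- The tubular tensor `𝒳ᴴ * 𝒴` for `n × 1 × p` tensors `𝒳, 𝒴`. -/
noncomputable def xHy {n p : ℕ} (X Y : Fin p → Fin n → ℂ) : Fin p → ℂ :=
  fun i => ∑ j, star (X (j - i)) ⬝ᵥ Y j

/-- The tubular tensor `𝒳ᴴ * 𝒳` for an `n × 1 × p` tensor `𝒳`. -/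
noncomputable def xHx {n p : ℕ} (X : Fin p → Fin n → ℂ) : Fin p → ℂ := xHy X X

/-- T-linear independence of a family of `n × 1 × p` tensors
(coefficients are tubular tensors acting via the T-product). -/
def TLinIndep {n p k : ℕ} (X : Fin k → Fin p → Fin n → ℂ) : Prop :=
  ∀ c : Fin k → Fin p → ℂ,
    (∀ i : Fin p, ∑ j, ∑ t, c j t • X j (i - t) = 0) → ∀ j, c j = 0

/-- `[λ]` is a tubular eigenvalue of the `n × n × p` tensor `𝒜`:
`𝒜 * 𝒳 = 𝒳 * [λ]` for some eigentensor `𝒳` with `𝒳ᴴ * 𝒳` invertible. -/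
def IsTubEig {n p : ℕ} (A : Fin p → Matrix (Fin n) (Fin n) ℂ) (lam : Fin p → ℂ) : Prop :=
  ∃ X : Fin p → Fin n → ℂ,
    (∀ i, ∑ t, (A (i - t)).mulVec (X t) = ∑ t, lam t • X (i - t)) ∧
    IsUnit (circ p (xHx X))
/-- `bcirc(𝒜 * ℬ) = bcirc(𝒜) bcirc(ℬ)`, and the T-product is associative. -/
theorem bcirc_tmul_and_tmul_assoc (n m l q p : ℕ)
    (A : Fin p → Matrix (Fin n) (Fin m) ℂ) (B : Fin p → Matrix (Fin m) (Fin l) ℂ)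
    (C : Fin p → Matrix (Fin l) (Fin q) ℂ) :
    bcirc (tmul A B) = bcirc A * bcirc B ∧ tmul (tmul A B) C = tmul A (tmul B C) := by
  obtain _ | p := p
  · exact ⟨by ext ⟨j, r⟩; exact j.elim0, by funext i; exact i.elim0⟩
  constructor
  · ext ⟨j, r⟩ ⟨k, c⟩
    simp only [bcirc, tmul, Matrix.mul_apply, Matrix.of_apply, Matrix.sum_apply,
      Fintype.sum_prod_type]
    rw [← Equiv.sum_comp (Equiv.subRight k)
      (fun i => ∑ s, A (j - k - i) r s * B i s c)]
    simp only [Equiv.subRight_apply, sub_sub_sub_cancel_right]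
  · funext i
    have h : ∀ j : Fin (p + 1), (∑ t, A (i - j - t) * B t) = ∑ t, A (i - t) * B (t - j) := by
      intro j
      rw [← Equiv.sum_comp (Equiv.subRight j) (fun t => A (i - j - t) * B t)]
      simp only [Equiv.subRight_apply, sub_sub_sub_cancel_right]
    simp only [tmul, h]
    simp only [Matrix.sum_mul, Matrix.mul_sum]
    rw [Finset.sum_comm]
    simp [Matrix.mul_assoc]
end

section
/- For an n×1×p tensor 𝒳, the 1×1×p tubular tensor 𝒳^H * 𝒳 is invertible (w.r.t. the T-product) if and only if all the vectors x̃_1,…,x̃_p appearing in the block diagonalization bcirc(𝒳) = (F_p ⊗ I_n) blockdiag(x̃_1,…,x̃_p) F_p^H are nonzero. -/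
open Matrix Complex Finset Kronecker
open scoped ComplexOrder

/-! `circ(𝒳ᴴ * 𝒳)` is the Gram matrix `bcirc(𝒳)ᴴ bcirc(𝒳)`. Since `F_p` and `F_p ⊗ I_n` are
unitary, the block diagonalization turns it into a unitary conjugate of
`diag(‖x̃₁‖², …, ‖x̃ₚ‖²)`, which is invertible exactly when no `x̃ᵢ` vanishes. -/

theorem IsPrimitiveRoot.sum_pow_mul_inv_pow {K : Type*} [Field K] {ω : K} {p : ℕ}
    (hω : IsPrimitiveRoot ω p) {j k : ℕ} (hj : j < p) (hk : k < p) :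
    ∑ m ∈ range p, (ω ^ j * ω⁻¹ ^ k) ^ m = if j = k then (p : K) else 0 := by
  have hω0 : ω ≠ 0 := hω.ne_zero (by omega)
  split_ifs with hjk
  · rw [hjk, inv_pow, mul_inv_cancel₀ (pow_ne_zero _ hω0)]
    simp
  · have hz : ω ^ j * ω⁻¹ ^ k ≠ 1 := by
      rw [inv_pow, ← div_eq_mul_inv, Ne, div_eq_one_iff_eq (pow_ne_zero _ hω0)]
      exact fun h => hjk (hω.pow_inj hj hk h)
    have hzp : (ω ^ j * ω⁻¹ ^ k) ^ p = 1 := by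
      rw [mul_pow, ← pow_mul, ← pow_mul, mul_comm j, mul_comm k, pow_mul, pow_mul, inv_pow,
        hω.pow_eq_one]
      simp
    rw [geom_sum_eq hz, hzp, sub_self, zero_div]

theorem Fp_apply (p : ℕ) (j k : Fin p) :
    Fp p j k = (exp (2 * Real.pi * I / p))⁻¹ ^ (j.val * k.val) / (√p : ℂ) := by
  rw [Fp, of_apply, ← exp_neg, ← exp_nat_mul]
  congr 2
  push_cast
  ring

theorem Fp_mem_unitaryGroup (p : ℕ) : Fp p ∈ unitaryGroup (Fin p) ℂ := by
  rw [mem_unitaryGroup_iff']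
  ext j k
  have hp : p ≠ 0 := j.pos.ne'
  have hω : IsPrimitiveRoot (exp (2 * Real.pi * I / p)) p := isPrimitiveRoot_exp p hp
  set ω := exp (2 * Real.pi * I / p)
  have hconj : star ω⁻¹ = ω := by
    rw [star_inv₀, Complex.star_def, ← Complex.exp_conj, ← exp_neg]
    congr 1
    simp [map_ofNat, neg_div]
  have hsqrt : star (√p : ℂ) * (√p : ℂ) = p := by
    rw [Complex.star_def, conj_ofReal, ← ofReal_mul, Real.mul_self_sqrt (Nat.cast_nonneg p)]
    norm_cast
  calc (star (Fp p) * Fp p) j k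
      = (∑ m ∈ range p, (ω ^ j.val * ω⁻¹ ^ k.val) ^ m) / p := by
        rw [mul_apply, Finset.sum_div, ← Fin.sum_univ_eq_sum_range
          (fun m => (ω ^ j.val * ω⁻¹ ^ k.val) ^ m / p)]
        refine Finset.sum_congr rfl fun m _ => ?_
        rw [star_apply, Fp_apply, Fp_apply, star_div₀, star_pow, hconj, div_mul_div_comm, hsqrt,
          mul_pow, ← pow_mul, ← pow_mul, mul_comm m.val, mul_comm m.val]
    _ = (1 : Matrix (Fin p) (Fin p) ℂ) j k := by
        rw [hω.sum_pow_mul_inv_pow j.isLt k.isLt, one_apply]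
        by_cases hjk : j = k <;> simp [hjk, Fin.val_inj, hp]

theorem circ_xHx_eq_conjTranspose_mul_self {n p : ℕ} (X : Fin p → Fin n → ℂ) :
    circ p (xHx X) = (bcircV X)ᴴ * bcircV X := by
  ext j k
  have : NeZero p := ⟨j.pos.ne'⟩
  rw [mul_apply, Fintype.sum_prod_type]
  simp only [circ, xHx, xHy, of_apply, conjTranspose_apply, bcircV, dotProduct, Pi.star_apply]
  refine Fintype.sum_equiv (Equiv.addRight k) _ _ fun m => ?_
  rw [Equiv.coe_addRight, sub_sub_eq_add_sub, add_sub_cancel_right]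

theorem blockDiagVec_conjTranspose_mul_self {n p : ℕ} (x : Fin p → Fin n → ℂ) :
    (blockDiagVec x)ᴴ * blockDiagVec x = diagonal fun i => star (x i) ⬝ᵥ x i := by
  ext j k
  rw [mul_apply, Fintype.sum_prod_type]
  by_cases hjk : j = k
  · subst hjk
    simp [blockDiagVec, dotProduct]
  · simp [blockDiagVec, hjk, Ne.symm hjk]

theorem isUnit_conjTranspose_mul_self_unitary_mul_mul_unitary_iff {R m k : Type*} [Semiring R]
    [StarRing R] [Fintype m] [DecidableEq m] [Fintype k] [DecidableEq k] {U : Matrix m m R}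
    {V : Matrix k k R} (hU : U ∈ unitary (Matrix m m R)) (hV : V ∈ unitary (Matrix k k R))
    (A : Matrix m k R) :
    IsUnit ((U * A * V)ᴴ * (U * A * V)) ↔ IsUnit (Aᴴ * A) := by
  have hUU : Uᴴ * U = 1 := Unitary.star_mul_self_of_mem hU
  have hcongr : (U * A * V)ᴴ * (U * A * V) = Vᴴ * (Aᴴ * A) * V := by
    simp only [conjTranspose_mul, Matrix.mul_assoc]
    rw [← Matrix.mul_assoc Uᴴ, hUU, Matrix.one_mul]
  have hVunit : IsUnit V := Unitary.isUnit_coe (U := ⟨V, hV⟩)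
  have hVHunit : IsUnit Vᴴ := (isUnit_conjTranspose V).mpr hVunit
  rw [hcongr, hVunit.mul_right_iff, hVHunit.mul_left_iff]

/-- `𝒳ᴴ * 𝒳` is invertible iff all Fourier-block vectors of `𝒳` are nonzero. -/
theorem xHx_invertible_iff_blocks_ne_zero (n p : ℕ) (X xt : Fin p → Fin n → ℂ)
    (h : bcircV X = (Fp p ⊗ₖ (1 : Matrix (Fin n) (Fin n) ℂ)) * blockDiagVec xt * (Fp p)ᴴ) :
    IsUnit (circ p (xHx X)) ↔ ∀ i, xt i ≠ 0 := by
  have hF : Fp p ∈ unitary (Matrix (Fin p) (Fin p) ℂ) := Fp_mem_unitaryGroup p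
  have hFH : (Fp p)ᴴ ∈ unitary (Matrix (Fin p) (Fin p) ℂ) := Unitary.star_mem hF
  rw [circ_xHx_eq_conjTranspose_mul_self, h,
    isUnit_conjTranspose_mul_self_unitary_mul_mul_unitary_iff
      (kronecker_mem_unitary hF (one_mem _)) hFH,
    blockDiagVec_conjTranspose_mul_self, isUnit_diagonal, Pi.isUnit_iff]
  simp only [isUnit_iff_ne_zero, Ne, dotProduct_star_self_eq_zero]
end

section
/- For an n×1×p tensor 𝒳, the matrix bcirc(𝒳)^H bcirc(𝒳) is singular if and only if there exists a nonzero vector a ∈ ℂ^p with X·circ(a) = 0, where X is the n×p matrix whose columns are the frontal slices of 𝒳 (equivalently, iff there is a nonzero tubular tensor [â] with 𝒳 * [â] = 0). -/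
open Matrix Complex Finset Kronecker
open scoped ComplexOrder

private lemma gram_not_unit_iff {m p : Type*} [Fintype m] [Fintype p] [DecidableEq p]
    (A : Matrix m p ℂ) :
    ¬ IsUnit (Aᴴ * A) ↔ ∃ a : p → ℂ, a ≠ 0 ∧ A *ᵥ a = 0 := by
  rw [Matrix.isUnit_iff_isUnit_det, isUnit_iff_ne_zero, not_not,
    ← Matrix.exists_mulVec_eq_zero_iff]
  constructor
  · rintro ⟨a, ha, h⟩
    refine ⟨a, ha, ?_⟩
    have h0 : star a ⬝ᵥ ((Aᴴ * A) *ᵥ a) = 0 := by rw [h, dotProduct_zero]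
    rw [← Matrix.mulVec_mulVec, Matrix.dotProduct_mulVec, ← Matrix.star_mulVec] at h0
    exact (dotProduct_star_self_eq_zero).mp h0
  · rintro ⟨a, ha, h⟩
    exact ⟨a, ha, by rw [← Matrix.mulVec_mulVec, h, Matrix.mulVec_zero]⟩

/-- `bcirc(𝒳)ᴴ bcirc(𝒳)` is singular iff `X circ(a) = 0` for some nonzero
`a`; equivalently, iff `𝒳 * [b] = 0` for some nonzero tubular tensor `[b]`. -/
theorem bcircV_gram_singular_iff (n p : ℕ) (X : Fin p → Fin n → ℂ) :
    (¬ IsUnit ((bcircV X)ᴴ * bcircV X) ↔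
        ∃ a : Fin p → ℂ, a ≠ 0 ∧
          (Matrix.of fun (r : Fin n) (k : Fin p) => X k r) * circ p a = 0) ∧
    (¬ IsUnit ((bcircV X)ᴴ * bcircV X) ↔
        ∃ b : Fin p → ℂ, b ≠ 0 ∧ ∀ i : Fin p, ∑ j, b j • X (i - j) = 0) := by
  rcases eq_or_ne p 0 with hp | hp
  · subst hp
    have hu : IsUnit ((bcircV X)ᴴ * bcircV X) := by
      have : (bcircV X)ᴴ * bcircV X = 1 := Subsingleton.elim _ _
      rw [this]; exact isUnit_one
    have hz : ∀ a : Fin 0 → ℂ, a = 0 := fun a => funext fun x => x.elim0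
    constructor <;> constructor <;> intro h
    · exact absurd hu h
    · obtain ⟨a, ha, _⟩ := h; exact absurd (hz a) ha
    · exact absurd hu h
    · obtain ⟨a, ha, _⟩ := h; exact absurd (hz a) ha
  · haveI : NeZero p := ⟨hp⟩
    have key : ¬ IsUnit ((bcircV X)ᴴ * bcircV X) ↔
        ∃ b : Fin p → ℂ, b ≠ 0 ∧ ∀ i : Fin p, ∑ j, b j • X (i - j) = 0 := by
      rw [gram_not_unit_iff]
      apply exists_congr; intro b
      apply and_congr_right'
      constructor
      · intro h i
        funext r
        have := congr_fun h (i, r)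
        simpa [bcircV, Matrix.mulVec, dotProduct, mul_comm] using this
      · intro h
        funext ir
        obtain ⟨i, r⟩ := ir
        have := congr_fun (h i) r
        simpa [bcircV, Matrix.mulVec, dotProduct, mul_comm] using this
    refine ⟨key.trans ?_, key⟩
    constructor
    · rintro ⟨b, hb, h⟩
      refine ⟨fun j => b (-j), ?_, ?_⟩
      · intro h0
        apply hb
        funext j
        have := congr_fun h0 (-j)
        simpa using this
      · funext r i
        have hi : ∑ j, b j • X (i - j) r = 0 := by simpa using congr_fun (h i) r
        have e : ∑ j, b j • X (i - j) r = ∑ k, X k r * b (-(k - i)) :=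
          Fintype.sum_equiv (Equiv.subLeft i) _ _ (fun j => by
            rw [Equiv.subLeft_apply, sub_sub_cancel_left, neg_neg, smul_eq_mul, mul_comm])
        simp only [Matrix.mul_apply, Matrix.of_apply, circ, Matrix.zero_apply]
        rw [← e]
        exact hi
    · rintro ⟨a, ha, h⟩
      refine ⟨fun j => a (-j), ?_, ?_⟩
      · intro h0
        apply ha
        funext j
        have := congr_fun h0 (-j)
        simpa using this
      · intro i
        funext r
        have hi : ∑ k, X k r * a (k - i) = 0 := by
          have := congr_fun (congr_fun h r) i
          simpa [Matrix.mul_apply, circ] using this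
        have e : ∑ j, a (-j) • X (i - j) r = ∑ k, X k r * a (k - i) :=
          Fintype.sum_equiv (Equiv.subLeft i) _ _ (fun j => by
            rw [Equiv.subLeft_apply, sub_sub_cancel_left, smul_eq_mul, mul_comm])
        simp only [Pi.zero_apply, Finset.sum_apply, Pi.smul_apply]
        rw [e]
        exact hi
end

section
/- Let 𝒳_1,…,𝒳_k be n×1×p tensors with block diagonalizations bcirc(𝒳_j) = (F_p ⊗ I_n) blockdiag(x̃_1^{(j)},…,x̃_p^{(j)}) F_p^H. The tensors 𝒳_1,…,𝒳_k are T-linearly independent if and only if for each ℓ ∈ {1,…,p} the set {x̃_ℓ^{(1)},…,x̃_ℓ^{(k)}} ⊂ ℂ^n is linearly independent. -/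
open Matrix Complex Finset Kronecker
open scoped ComplexOrder

/-!
By `h`, the matrix form `∑ⱼ bcirc(𝒳ⱼ) cⱼ` of a T-linear combination factors as
`(F_p ⊗ I_n) (∑ⱼ blockdiag(x̃⁽ʲ⁾) (F_pᴴ cⱼ))`. Both Fourier factors are invertible (`F_p` is a
rescaled Vandermonde matrix at the `p`-th roots of unity), so the substitution `dⱼ = F_pᴴ cⱼ`
is a bijection and the combination vanishes iff `∑ⱼ (dⱼ)_ℓ x̃_ℓ⁽ʲ⁾ = 0` for every `ℓ`. As the
`dⱼ` are arbitrary, these `p` conditions decouple into linear independence block by block.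
-/

theorem Fintype.forall_linearIndependent_iff {R M κ ι : Type*} [Ring R] [AddCommGroup M]
    [Module R M] [Fintype κ] [DecidableEq ι] (x : κ → ι → M) :
    (∀ ℓ, LinearIndependent R fun j => x j ℓ) ↔
      ∀ d : κ → ι → R, (∀ ℓ, ∑ j, d j ℓ • x j ℓ = 0) → d = 0 := by
  simp only [Fintype.linearIndependent_iff]
  constructor
  · intro hx d hd
    funext j ℓ
    exact hx ℓ (fun j => d j ℓ) (hd ℓ) j
  · intro hx ℓ g hg j
    have hsingle : ∀ ℓ', ∑ j, (Pi.single ℓ (g j) : ι → R) ℓ' • x j ℓ' = 0 := by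
      intro ℓ'
      obtain rfl | hne := eq_or_ne ℓ' ℓ
      · simpa using hg
      · simp [hne]
    simpa using congrFun (congrFun (hx _ hsingle) j) ℓ

theorem Matrix.forall_sum_mulVec_eq_zero_iff_of_isUnit {ι m o R : Type*} [Fintype ι]
    [Fintype m] [DecidableEq m] [Fintype o] [DecidableEq o] [CommRing R]
    {A : Matrix m m R} {B : Matrix o o R} (hA : IsUnit A) (hB : IsUnit B)
    (D : ι → Matrix m o R) :
    (∀ c : ι → o → R, ∑ j, (A * D j * B) *ᵥ c j = 0 → c = 0) ↔
      ∀ d : ι → o → R, ∑ j, D j *ᵥ d j = 0 → d = 0 := by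
  have hfactor : ∀ c : ι → o → R,
      ∑ j, (A * D j * B) *ᵥ c j = A *ᵥ ∑ j, D j *ᵥ (B *ᵥ c j) := by
    intro c
    simp only [mulVec_sum, mulVec_mulVec, Matrix.mul_assoc]
  have hBinj := (mulVec_injective_of_isUnit hB).comp_left (α := ι)
  have hBsurj := (mulVec_surjective_iff_isUnit.mpr hB).comp_left (α := ι)
  simp only [hfactor, (mulVec_injective_of_isUnit hA).eq_iff' (mulVec_zero A)]
  rw [Iff.comm, hBsurj.forall]
  exact forall_congr' fun c => imp_congr_right fun _ =>
    hBinj.eq_iff' (funext fun _ => mulVec_zero B)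

theorem blockDiagVec_mulVec {n p : ℕ} (x : Fin p → Fin n → ℂ) (w : Fin p → ℂ) :
    blockDiagVec x *ᵥ w = fun q => w q.1 * x q.1 q.2 := by
  funext q
  simp [blockDiagVec, mulVec, dotProduct, mul_comm]

theorem sum_blockDiagVec_mulVec_eq_zero_iff {n p k : ℕ} (x : Fin k → Fin p → Fin n → ℂ)
    (d : Fin k → Fin p → ℂ) :
    ∑ j, blockDiagVec (x j) *ᵥ d j = 0 ↔ ∀ ℓ, ∑ j, d j ℓ • x j ℓ = 0 := by
  simp only [blockDiagVec_mulVec, funext_iff, Prod.forall, Finset.sum_apply, Pi.zero_apply,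
    Pi.smul_apply, smul_eq_mul]

theorem bcircV_mulVec_apply {n p : ℕ} (X : Fin p → Fin n → ℂ) (c : Fin p → ℂ) (i : Fin p)
    (r : Fin n) : (bcircV X *ᵥ c) (i, r) = (∑ t, c t • X (i - t)) r := by
  simp [bcircV, mulVec, dotProduct, Finset.sum_apply, mul_comm]

theorem tLinIndep_iff_sum_bcircV_mulVec {n p k : ℕ} (X : Fin k → Fin p → Fin n → ℂ) :
    TLinIndep X ↔ ∀ c : Fin k → Fin p → ℂ, ∑ j, bcircV (X j) *ᵥ c j = 0 → c = 0 := by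
  have hcomb : ∀ c : Fin k → Fin p → ℂ, ∑ j, bcircV (X j) *ᵥ c j = 0 ↔
      ∀ i, ∑ j, ∑ t, c j t • X j (i - t) = 0 := by
    intro c
    simp only [funext_iff, Prod.forall, Finset.sum_apply, bcircV_mulVec_apply, Pi.zero_apply]
  simp only [TLinIndep, hcomb, funext_iff, Pi.zero_apply]

theorem Fp_eq_smul_vandermonde (p : ℕ) :
    Fp p = (Real.sqrt p : ℂ)⁻¹ •
      vandermonde fun j : Fin p => Complex.exp (-(2 * Real.pi * Complex.I) / p) ^ j.val := by
  ext j k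
  simp only [Fp, Matrix.smul_apply, vandermonde_apply, of_apply, smul_eq_mul,
    ← Complex.exp_nat_mul]
  rw [div_eq_inv_mul]
  congr 2
  ring

theorem isUnit_Fp (p : ℕ) : IsUnit (Fp p) := by
  obtain rfl | hp := eq_or_ne p 0
  · exact isUnit_of_subsingleton _
  have hroot : IsPrimitiveRoot (Complex.exp (-(2 * Real.pi * Complex.I) / p)) p := by
    rw [neg_div, Complex.exp_neg]
    exact (Complex.isPrimitiveRoot_exp p hp).inv
  have hnodes : Function.Injective fun j : Fin p =>
      Complex.exp (-(2 * Real.pi * Complex.I) / p) ^ j.val :=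
    fun i j hij => Fin.ext (hroot.pow_inj i.isLt j.isLt hij)
  have hsqrt : (Real.sqrt p : ℂ) ≠ 0 := by
    exact_mod_cast Real.sqrt_ne_zero'.mpr (Nat.cast_pos.mpr (Nat.pos_of_ne_zero hp))
  rw [isUnit_iff_isUnit_det, Fp_eq_smul_vandermonde, det_smul, isUnit_iff_ne_zero]
  exact mul_ne_zero (pow_ne_zero _ (inv_ne_zero hsqrt)) (det_vandermonde_ne_zero_iff.mpr hnodes)

/-- T-linear independence is equivalent to linear independence of the
Fourier-block vectors in each of the `p` blocks. -/
theorem tLinIndep_iff_blocks_linIndep (n p k : ℕ) (X xt : Fin k → Fin p → Fin n → ℂ)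
    (h : ∀ j, bcircV (X j) =
      (Fp p ⊗ₖ (1 : Matrix (Fin n) (Fin n) ℂ)) * blockDiagVec (xt j) * (Fp p)ᴴ) :
    TLinIndep X ↔ ∀ ℓ : Fin p, LinearIndependent ℂ (fun j : Fin k => xt j ℓ) := by
  have hK : IsUnit (Fp p ⊗ₖ (1 : Matrix (Fin n) (Fin n) ℂ)) :=
    Matrix.IsUnit.kronecker (isUnit_Fp p) isUnit_one
  have hFH : IsUnit (Fp p)ᴴ := (isUnit_conjTranspose _).mpr (isUnit_Fp p)
  rw [tLinIndep_iff_sum_bcircV_mulVec, Fintype.forall_linearIndependent_iff]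
  simp only [h]
  rw [forall_sum_mulVec_eq_zero_iff_of_isUnit hK hFH]
  simp only [sum_blockDiagVec_mulVec_eq_zero_iff]
end

section
/- If [λ_1],…,[λ_k] are tubular eigenvalues of an n×n×p tensor 𝒜 with associated eigentensors 𝒳_1,…,𝒳_k, and [λ_i] − [λ_j] is invertible (its circulant matrix is nonsingular) for all i ≠ j, then the eigentensors 𝒳_1,…,𝒳_k are T-linearly independent. -/
open Matrix Complex Finset Kronecker
open scoped ComplexOrder

section AuxTLI
variable {p : ℕ} [NeZero p] {χ : Fin p → ℂ}

private lemma aux_reindex (hχ : ∀ a b : Fin p, χ (a + b) = χ a * χ b)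
    {M : Type*} [AddCommMonoid M] [Module ℂ M]
    (B : Fin p → Fin p → M) (f : Fin p) :
    ∑ i, ∑ t, χ (i * f) • B (i - t) t
      = ∑ t, ∑ m, (χ (m * f) * χ (t * f)) • B m t := by
  rw [Finset.sum_comm]
  refine Finset.sum_congr rfl fun t _ => ?_
  rw [← Equiv.sum_comp (Equiv.addRight t) (fun i => χ (i * f) • B (i - t) t)]
  refine Finset.sum_congr rfl fun m _ => ?_
  simp only [Equiv.coe_addRight, add_sub_cancel_right]
  rw [add_mul, hχ]

private lemma aux_conv (hχ : ∀ a b : Fin p, χ (a + b) = χ a * χ b)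
    {M : Type*} [AddCommMonoid M] [Module ℂ M]
    (g : Fin p → ℂ) (v : Fin p → M) (f : Fin p) :
    ∑ i, χ (i * f) • ∑ t, g t • v (i - t) =
      (∑ t, χ (t * f) * g t) • ∑ m, χ (m * f) • v m := by
  calc ∑ i, χ (i * f) • ∑ t, g t • v (i - t)
      = ∑ i, ∑ t, χ (i * f) • (g t • v (i - t)) := by
        refine Finset.sum_congr rfl fun i _ => Finset.smul_sum
    _ = ∑ t, ∑ m, (χ (m * f) * χ (t * f)) • (g t • v m) :=
        aux_reindex hχ (fun m t => g t • v m) f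
    _ = ∑ t, (χ (t * f) * g t) • ∑ m, χ (m * f) • v m := by
        refine Finset.sum_congr rfl fun t _ => ?_
        rw [Finset.smul_sum]
        refine Finset.sum_congr rfl fun m _ => ?_
        rw [smul_smul, smul_smul]
        congr 1; ring
    _ = (∑ t, χ (t * f) * g t) • ∑ m, χ (m * f) • v m := (Finset.sum_smul).symm

private lemma aux_sum_mulVec {n : ℕ} {ι : Type*} [Fintype ι]
    (A : ι → Matrix (Fin n) (Fin n) ℂ) (w : Fin n → ℂ) :
    (∑ i, A i).mulVec w = ∑ i, (A i).mulVec w := by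
  funext r
  simp only [Matrix.mulVec, dotProduct, Matrix.sum_apply, Finset.sum_mul,
    Finset.sum_apply]
  exact Finset.sum_comm

private lemma aux_mulVec_sum {n : ℕ} {ι : Type*} [Fintype ι]
    (A : Matrix (Fin n) (Fin n) ℂ) (w : ι → Fin n → ℂ) :
    A.mulVec (∑ i, w i) = ∑ i, A.mulVec (w i) := by
  rw [← Matrix.mulVecLin_apply, map_sum]
  simp only [Matrix.mulVecLin_apply]

private lemma aux_convM (hχ : ∀ a b : Fin p, χ (a + b) = χ a * χ b)
    {n : ℕ} (Am : Fin p → Matrix (Fin n) (Fin n) ℂ) (v : Fin p → Fin n → ℂ) (f : Fin p) :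
    ∑ i, χ (i * f) • ∑ t, (Am (i - t)).mulVec (v t) =
      (∑ m, χ (m * f) • Am m).mulVec (∑ t, χ (t * f) • v t) := by
  calc ∑ i, χ (i * f) • ∑ t, (Am (i - t)).mulVec (v t)
      = ∑ i, ∑ t, χ (i * f) • (Am (i - t)).mulVec (v t) := by
        refine Finset.sum_congr rfl fun i _ => Finset.smul_sum
    _ = ∑ t, ∑ m, (χ (m * f) * χ (t * f)) • (Am m).mulVec (v t) :=
        aux_reindex hχ (fun m t => (Am m).mulVec (v t)) f
    _ = (∑ m, χ (m * f) • Am m).mulVec (∑ t, χ (t * f) • v t) := by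
        rw [aux_sum_mulVec, Finset.sum_comm]
        refine Finset.sum_congr rfl fun m _ => ?_
        rw [Matrix.smul_mulVec, aux_mulVec_sum, Finset.smul_sum]
        refine Finset.sum_congr rfl fun t _ => ?_
        rw [Matrix.mulVec_smul, smul_smul]

private lemma aux_circ (hχ : ∀ a b : Fin p, χ (a + b) = χ a * χ b) (hχ0 : χ 0 = 1)
    (v : Fin p → ℂ) (h : IsUnit (circ p v)) (f : Fin p) :
    ∑ t, χ (t * f) * v t ≠ 0 := by
  intro hS
  obtain ⟨u, hu⟩ := h
  have hker : (circ p v).mulVec (fun t => χ (-(t * f))) = 0 := by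
    funext j
    show ∑ k, circ p v j k * χ (-(k * f)) = 0
    calc ∑ k, circ p v j k * χ (-(k * f))
        = ∑ m, circ p v j (j - m) * χ (-((j - m) * f)) :=
          (Equiv.sum_comp (Equiv.subLeft j) (fun k => circ p v j k * χ (-(k * f)))).symm
      _ = ∑ m, χ (-(j * f)) * (χ (m * f) * v m) := by
          refine Finset.sum_congr rfl fun m _ => ?_
          show v (j - (j - m)) * χ (-((j - m) * f)) = _
          rw [sub_sub_cancel]
          have he : -((j - m) * f) = m * f + -(j * f) := by open Fin.CommRing in ring
          rw [he, hχ]; ring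
      _ = χ (-(j * f)) * ∑ m, χ (m * f) * v m := (Finset.mul_sum _ _ _).symm
      _ = 0 := by rw [hS, mul_zero]
  have h1 : ((↑u⁻¹ : Matrix (Fin p) (Fin p) ℂ) * circ p v) = 1 := by
    rw [← hu]; exact u.inv_mul
  have hw : (fun t => χ (-(t * f))) = (0 : Fin p → ℂ) := by
    calc (fun t => χ (-(t * f)))
        = (1 : Matrix (Fin p) (Fin p) ℂ).mulVec (fun t => χ (-(t * f))) :=
          (Matrix.one_mulVec _).symm
      _ = (↑u⁻¹ : Matrix (Fin p) (Fin p) ℂ).mulVec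
            ((circ p v).mulVec (fun t => χ (-(t * f)))) := by
          rw [Matrix.mulVec_mulVec, h1]
      _ = 0 := by rw [hker, Matrix.mulVec_zero]
  have h0 := congrFun hw 0
  simp only [zero_mul, neg_zero, hχ0, Pi.zero_apply] at h0
  exact one_ne_zero h0

private lemma aux_orth {ζ : ℂ} (hprim : IsPrimitiveRoot ζ p) (m : Fin p) :
    ∑ f : Fin p, ζ ^ (m * f).val = if m = 0 then (p : ℂ) else 0 := by
  have hord : p = orderOf ζ := hprim.eq_orderOf
  have hval : ∀ f : Fin p, ζ ^ (m * f).val = (ζ ^ m.val) ^ f.val := by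
    intro f
    have h2 : m.val * f.val % p = m.val * f.val % orderOf ζ := by rw [← hord]
    rw [Fin.val_mul, h2, pow_mod_orderOf, pow_mul]
  simp_rw [hval]
  rw [Fin.sum_univ_eq_sum_range (fun i => (ζ ^ m.val) ^ i) p]
  by_cases hm : m = 0
  · subst hm
    simp
  · rw [if_neg hm]
    have hne : ζ ^ m.val ≠ 1 := by
      refine hprim.pow_ne_one_of_pos_of_lt ?_ m.isLt
      exact (fun hc => hm (Fin.ext hc))
    rw [geom_sum_eq hne, ← pow_mul, mul_comm, pow_mul, hprim.pow_eq_one, one_pow,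
      sub_self, zero_div]

private lemma aux_dot_sum {n : ℕ} {ι : Type*} [Fintype ι]
    (u : Fin n → ℂ) (g : ι → ℂ) (w : ι → Fin n → ℂ) :
    u ⬝ᵥ (∑ r, g r • w r) = ∑ r, g r * (u ⬝ᵥ w r) := by
  simp only [dotProduct, Finset.sum_apply, Pi.smul_apply, smul_eq_mul, Finset.mul_sum]
  rw [Finset.sum_comm]
  exact Finset.sum_congr rfl fun r _ => Finset.sum_congr rfl fun a _ => by ring

private lemma aux_xHx (hχ : ∀ a b : Fin p, χ (a + b) = χ a * χ b)
    (hχconj : ∀ a : Fin p, (starRingEnd ℂ) (χ a) = χ (-a)) {n : ℕ}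
    (Y : Fin p → Fin n → ℂ) (f : Fin p) (h0 : ∑ t, χ (t * f) • Y t = 0) :
    ∑ i, χ (i * f) * xHx Y i = 0 := by
  calc ∑ i, χ (i * f) * xHx Y i
      = ∑ i, ∑ r, χ (i * f) * (star (Y (r - i)) ⬝ᵥ Y r) := by
        refine Finset.sum_congr rfl fun i _ => ?_
        rw [xHx, xHy, Finset.mul_sum]
    _ = ∑ r, ∑ i, χ (i * f) * (star (Y (r - i)) ⬝ᵥ Y r) := Finset.sum_comm
    _ = ∑ r, ∑ m, χ ((r - m) * f) * (star (Y (r - (r - m))) ⬝ᵥ Y r) := by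
        refine Finset.sum_congr rfl fun r _ => ?_
        exact (Equiv.sum_comp (Equiv.subLeft r)
          (fun i => χ (i * f) * (star (Y (r - i)) ⬝ᵥ Y r))).symm
    _ = ∑ r, ∑ m, (starRingEnd ℂ) (χ (m * f)) * (χ (r * f) * (star (Y m) ⬝ᵥ Y r)) := by
        refine Finset.sum_congr rfl fun r _ => Finset.sum_congr rfl fun m _ => ?_
        rw [sub_sub_cancel, hχconj]
        have he : (r - m) * f = -(m * f) + r * f := by open Fin.CommRing in ring
        rw [he, hχ]; ring
    _ = ∑ m, (starRingEnd ℂ) (χ (m * f)) * (star (Y m) ⬝ᵥ ∑ r, χ (r * f) • Y r) := by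
        rw [Finset.sum_comm]
        refine Finset.sum_congr rfl fun m _ => ?_
        rw [aux_dot_sum, Finset.mul_sum]
    _ = 0 := by
        rw [h0]
        simp

end AuxTLI

/-- eigentensors associated with tubular eigenvalues whose pairwise
differences are invertible are T-linearly independent. -/
theorem eigentensors_tLinIndep (n p k : ℕ) (hk : 1 < k)
    (A : Fin p → Matrix (Fin n) (Fin n) ℂ)
    (lam : Fin k → Fin p → ℂ) (X : Fin k → Fin p → Fin n → ℂ)
    (heig : ∀ j i, ∑ t, (A (i - t)).mulVec (X j t) = ∑ t, lam j t • X j (i - t))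
    (hunit : ∀ j, IsUnit (circ p (xHx (X j))))
    (hdist : ∀ i j, i ≠ j → IsUnit (circ p fun t => lam i t - lam j t)) :
    TLinIndep X := by
  intro c hc
  rcases Nat.eq_zero_or_pos p with hp | hp
  · intro j; subst hp; funext t; exact t.elim0
  haveI : NeZero p := ⟨hp.ne'⟩
  have hprim : IsPrimitiveRoot (Complex.exp (2 * (Real.pi : ℂ) * Complex.I / p)) p :=
    Complex.isPrimitiveRoot_exp p (NeZero.ne p)
  set ζ : ℂ := Complex.exp (2 * (Real.pi : ℂ) * Complex.I / p) with hζdef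
  have hord : p = orderOf ζ := hprim.eq_orderOf
  set χ : Fin p → ℂ := fun m => ζ ^ m.val with hχdef
  have hχ : ∀ a b : Fin p, χ (a + b) = χ a * χ b := by
    intro a b
    show ζ ^ ((a + b) : Fin p).val = ζ ^ a.val * ζ ^ b.val
    have h2 : (a.val + b.val) % p = (a.val + b.val) % orderOf ζ := by rw [← hord]
    rw [Fin.val_add, h2, pow_mod_orderOf, pow_add]
  have hχ0 : χ 0 = 1 := by
    show ζ ^ (0 : Fin p).val = 1
    simp
  have hχne : ∀ a : Fin p, χ a ≠ 0 := by
    intro a ha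
    have := hχ a (-a)
    rw [add_neg_cancel, hχ0, ha, zero_mul] at this
    exact one_ne_zero this
  have hζconj : ζ * (starRingEnd ℂ) ζ = 1 := by
    rw [hζdef, ← Complex.exp_conj, ← Complex.exp_add]
    have hc2 : 2 * (Real.pi : ℂ) * Complex.I / p +
        (starRingEnd ℂ) (2 * (Real.pi : ℂ) * Complex.I / p) = 0 := by
      rw [map_div₀, _root_.map_mul, _root_.map_mul, Complex.conj_I, Complex.conj_ofReal,
        map_ofNat, map_natCast]
      ring
    rw [hc2, Complex.exp_zero]
  have hχconj : ∀ a : Fin p, (starRingEnd ℂ) (χ a) = χ (-a) := by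
    intro a
    have h1 : χ a * (starRingEnd ℂ) (χ a) = 1 := by
      show ζ ^ a.val * (starRingEnd ℂ) (ζ ^ a.val) = 1
      rw [map_pow, ← mul_pow, hζconj, one_pow]
    have h2 : χ a * χ (-a) = 1 := by rw [← hχ, add_neg_cancel, hχ0]
    exact mul_left_cancel₀ (hχne a) (h1.trans h2.symm)
  -- nonvanishing of the transformed eigentensors
  have hxhat : ∀ j f, (∑ t, χ (t * f) • X j t) ≠ 0 := fun j f h0 =>
    aux_circ hχ hχ0 (xHx (X j)) (hunit j) f (aux_xHx hχ hχconj (X j) f h0)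
  -- transformed eigen-equations
  have heigh : ∀ j f, Matrix.mulVecLin (∑ m, χ (m * f) • A m) (∑ t, χ (t * f) • X j t)
      = (∑ t, χ (t * f) * lam j t) • (∑ t, χ (t * f) • X j t) := by
    intro j f
    rw [Matrix.mulVecLin_apply, ← aux_convM hχ A (X j) f, ← aux_conv hχ (lam j) (X j) f]
    exact Finset.sum_congr rfl fun i _ => by rw [heig j i]
  -- transformed eigenvalues are pairwise distinct
  have hinj : ∀ f : Fin p, Function.Injective fun j => ∑ t, χ (t * f) * lam j t := by
    intro f a b hab
    by_contra hne
    refine aux_circ hχ hχ0 (fun t => lam a t - lam b t) (hdist a b hne) f ?_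
    simp only [mul_sub]
    rw [Finset.sum_sub_distrib]
    simp only at hab
    rw [hab, sub_self]
  -- transformed coefficients vanish
  have hchat : ∀ f j, (∑ t, χ (t * f) * c j t) = 0 := by
    intro f
    have hli : LinearIndependent ℂ (fun j => ∑ t, χ (t * f) • X j t) :=
      Module.End.eigenvectors_linearIndependent'
        (Matrix.mulVecLin (∑ m, χ (m * f) • A m))
        (fun j => ∑ t, χ (t * f) * lam j t) (hinj f) _
        (fun j => ⟨Module.End.mem_eigenspace_iff.mpr (heigh j f), hxhat j f⟩)
    have hsum0 : ∑ j, (∑ t, χ (t * f) * c j t) • (∑ m, χ (m * f) • X j m) = 0 := by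
      calc ∑ j, (∑ t, χ (t * f) * c j t) • (∑ m, χ (m * f) • X j m)
          = ∑ j, ∑ i, χ (i * f) • ∑ t, c j t • X j (i - t) := by
            exact Finset.sum_congr rfl fun j _ => (aux_conv hχ (c j) (X j) f).symm
        _ = ∑ i, ∑ j, χ (i * f) • ∑ t, c j t • X j (i - t) := Finset.sum_comm
        _ = ∑ i, χ (i * f) • ∑ j, ∑ t, c j t • X j (i - t) := by
            exact Finset.sum_congr rfl fun i _ => (Finset.smul_sum).symm
        _ = 0 := by simp [hc]
    exact Fintype.linearIndependent_iff.mp hli _ hsum0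
  -- invert the transform
  intro j
  funext s
  have h2 : ∑ f, χ (-(s * f)) * (∑ t, χ (t * f) * c j t) = 0 := by
    simp [hchat]
  have h3 : ∑ t, c j t * (∑ f : Fin p, χ ((t - s) * f)) = 0 := by
    calc ∑ t, c j t * (∑ f : Fin p, χ ((t - s) * f))
        = ∑ t, ∑ f, χ (-(s * f)) * (χ (t * f) * c j t) := by
          refine Finset.sum_congr rfl fun t _ => ?_
          rw [Finset.mul_sum]
          refine Finset.sum_congr rfl fun f _ => ?_
          have he : (t - s) * f = t * f + -(s * f) := by open Fin.CommRing in ring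
          rw [he, hχ]; ring
      _ = ∑ f, ∑ t, χ (-(s * f)) * (χ (t * f) * c j t) := Finset.sum_comm
      _ = ∑ f, χ (-(s * f)) * ∑ t, χ (t * f) * c j t := by
          refine Finset.sum_congr rfl fun f _ => (Finset.mul_sum _ _ _).symm
      _ = 0 := h2
  have h4 : ∀ t : Fin p, (∑ f : Fin p, χ ((t - s) * f)) = if t - s = 0 then (p : ℂ) else 0 := by
    intro t
    rw [hχdef]
    exact aux_orth hprim (t - s)
  simp only [h4, sub_eq_zero, mul_ite, mul_zero, Finset.sum_ite_eq', Finset.mem_univ,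
    if_true] at h3
  have hp0 : ((p : ℂ)) ≠ 0 := Nat.cast_ne_zero.mpr (NeZero.ne p)
  show c j s = 0
  rcases mul_eq_zero.mp h3 with h | h
  · exact h
  · exact absurd h hp0
end

section
/- Let [λ] be a tubular eigenvalue of an n×n×p tensor 𝒜, and write F_p^H circ(λ) F_p = diag(λ̃_1,…,λ̃_p). Then each λ̃_i is an eigenvalue of the matrix bcirc(𝒜) (i.e., a T-eigenvalue of 𝒜). -/
open Matrix Complex Finset Kronecker
open scoped ComplexOrder

lemma Fp_unitary (p : ℕ) [NeZero p] : (Fp p)ᴴ * Fp p = 1 := by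
  have hp : (p : ℂ) ≠ 0 := Nat.cast_ne_zero.mpr (NeZero.ne p)
  have hpi : (2 * (Real.pi : ℂ) * Complex.I) ≠ 0 := by
    simp [Real.pi_ne_zero, Complex.I_ne_zero]
  ext j k
  rw [Matrix.mul_apply, Matrix.one_apply]
  set c : ℂ := ((k : ℕ) : ℂ) - ((j : ℕ) : ℂ) with hc
  set ζ : ℂ := Complex.exp (-(2 * Real.pi * Complex.I * c) / p) with hζ
  have key : ∀ m : Fin p, (Fp p)ᴴ j m * Fp p m k = ζ ^ (m : ℕ) / p := by
    intro m
    rw [Matrix.conjTranspose_apply]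
    show star (Complex.exp (-(2 * Real.pi * Complex.I * ((m:ℕ) * (j:ℕ))) / p) / (Real.sqrt p : ℂ))
        * (Complex.exp (-(2 * Real.pi * Complex.I * ((m:ℕ) * (k:ℕ))) / p) / (Real.sqrt p : ℂ)) = _
    have hstar : ∀ z : ℂ, star z = (starRingEnd ℂ) z := fun _ => rfl
    rw [hstar, map_div₀, ← Complex.exp_conj]
    have h1 : (starRingEnd ℂ) (-(2 * Real.pi * Complex.I * ((m:ℕ) * (j:ℕ))) / p)
        = (2 * Real.pi * Complex.I * ((m:ℕ) * (j:ℕ))) / p := by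
      simp only [map_div₀, map_neg, _root_.map_mul, Complex.conj_I, Complex.conj_ofReal,
        map_natCast, map_ofNat]
      ring
    have h2 : (starRingEnd ℂ) ((Real.sqrt p : ℂ)) = (Real.sqrt p : ℂ) := Complex.conj_ofReal _
    rw [h1, h2, div_mul_div_comm, ← Complex.exp_add]
    have h3 : (Real.sqrt p : ℂ) * (Real.sqrt p : ℂ) = (p : ℂ) := by
      rw [← Complex.ofReal_mul, Real.mul_self_sqrt (Nat.cast_nonneg p)]
      norm_num
    rw [h3, hζ, ← Complex.exp_nat_mul]
    congr 2
    field_simp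
    ring
  rw [Finset.sum_congr rfl (fun m _ => key m), ← Finset.sum_div,
    Fin.sum_univ_eq_sum_range (fun m => ζ ^ m) p]
  by_cases hjk : j = k
  · subst hjk
    have : ζ = 1 := by
      rw [hζ, hc]
      simp
    simp [this, hp]
  · rw [if_neg hjk]
    have hζp : ζ ^ p = 1 := by
      rw [hζ, ← Complex.exp_nat_mul]
      have : (p : ℂ) * (-(2 * Real.pi * Complex.I * c) / p)
          = ((((j : ℕ) : ℤ) - ((k : ℕ) : ℤ) : ℤ) : ℂ) * (2 * Real.pi * Complex.I) := by
        field_simp [hc]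
        rw [hc]; push_cast
        ring
      rw [this]
      exact Complex.exp_int_mul_two_pi_mul_I _
    have hζ1 : ζ ≠ 1 := by
      intro h
      rw [hζ, Complex.exp_eq_one_iff] at h
      obtain ⟨m, hm⟩ := h
      have hm' : -(2 * (Real.pi:ℂ) * Complex.I * c) = (m : ℂ) * (2 * Real.pi * Complex.I) * p := by
        field_simp at hm
        linear_combination (2 * (Real.pi:ℂ) * Complex.I) * hm
      have hcc : (2 * (Real.pi:ℂ) * Complex.I) * (-c) = (2 * (Real.pi:ℂ) * Complex.I) * ((m : ℂ) * p) := by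
        linear_combination hm'
      have h4 : (-c : ℂ) = (m : ℂ) * p := mul_left_cancel₀ hpi hcc
      have h5 : ((j : ℕ) : ℤ) - ((k : ℕ) : ℤ) = m * p := by
        have : (((j : ℕ) : ℤ) - ((k : ℕ) : ℤ) : ℂ) = ((m * (p:ℤ) : ℤ) : ℂ) := by
          push_cast
          rw [hc] at h4
          linear_combination h4
        exact_mod_cast this
      have h6 : ((j : ℕ) : ℤ) - ((k : ℕ) : ℤ) = 0 := by
        have hdvd : ((p:ℤ)) ∣ ((j : ℕ) : ℤ) - ((k : ℕ) : ℤ) := ⟨m, by rw [h5]; ring⟩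
        apply Int.eq_zero_of_abs_lt_dvd hdvd
        have hj := j.isLt; have hk := k.isLt
        rw [abs_lt]
        refine ⟨?_, ?_⟩ <;> omega
      have : (j : ℕ) = (k : ℕ) := by omega
      exact hjk (Fin.ext this)
    rw [geom_sum_eq hζ1, hζp]
    simp

lemma bcirc_mul_bcircV {n p : ℕ} [NeZero p] (A : Fin p → Matrix (Fin n) (Fin n) ℂ)
    (lam : Fin p → ℂ) (X : Fin p → Fin n → ℂ)
    (hX : ∀ i, ∑ t, (A (i - t)).mulVec (X t) = ∑ t, lam t • X (i - t)) :
    bcirc A * bcircV X = bcircV X * circ p lam := by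
  ext ⟨j, r⟩ k
  rw [Matrix.mul_apply, Matrix.mul_apply, Fintype.sum_prod_type]
  calc ∑ m : Fin p, ∑ s : Fin n, bcirc A (j, r) (m, s) * bcircV X (m, s) k
      = ∑ t : Fin p, ((A (j - k - t)).mulVec (X t)) r := by
        refine Fintype.sum_equiv (Equiv.subRight k) _ _ fun m => ?_
        simp only [bcirc, bcircV, Matrix.of_apply, Matrix.mulVec, dotProduct,
          Equiv.subRight_apply, sub_sub_sub_cancel_right]
    _ = (∑ t : Fin p, (A (j - k - t)).mulVec (X t)) r := by
        simp [Finset.sum_apply]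
    _ = (∑ t : Fin p, lam t • X (j - k - t)) r := by rw [hX]
    _ = ∑ t : Fin p, lam t * X (j - k - t) r := by
        simp [Finset.sum_apply]
    _ = ∑ m : Fin p, bcircV X (j, r) m * circ p lam m k := by
        refine Fintype.sum_equiv (Equiv.addRight k) _ _ fun t => ?_
        simp only [bcircV, circ, Matrix.of_apply, Equiv.coe_addRight, add_sub_cancel_right,
          sub_add_eq_sub_sub, sub_right_comm]
        ring

lemma bcircV_conjT_mul {n p : ℕ} [NeZero p] (X : Fin p → Fin n → ℂ) :
    (bcircV X)ᴴ * bcircV X = circ p (xHx X) := by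
  ext j k
  rw [Matrix.mul_apply, Fintype.sum_prod_type]
  show ∑ m : Fin p, ∑ s : Fin n, star (X (m - j) s) * X (m - k) s = xHy X X (j - k)
  unfold xHy
  refine Fintype.sum_equiv (Equiv.subRight k) _ _ fun m => ?_
  simp only [Equiv.subRight_apply, dotProduct, sub_sub_sub_cancel_right]
  rfl

/-- the `p` Fourier diagonal entries of a tubular eigenvalue of `𝒜`
are eigenvalues of `bcirc(𝒜)` (T-eigenvalues of `𝒜`). -/
theorem tubular_eigenvalue_gives_T_eigenvalues (n p : ℕ)
    (A : Fin p → Matrix (Fin n) (Fin n) ℂ) (lam : Fin p → ℂ)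
    (hlam : IsTubEig A lam) (d : Fin p → ℂ)
    (hd : (Fp p)ᴴ * circ p lam * Fp p = Matrix.diagonal d) :
    ∀ i : Fin p, ∃ v : Fin p × Fin n → ℂ, v ≠ 0 ∧ (bcirc A).mulVec v = d i • v := by
  intro i
  rcases Nat.eq_zero_or_pos p with hp | hp
  · subst hp; exact i.elim0
  haveI : NeZero p := ⟨hp.ne'⟩
  obtain ⟨X, hX, hU⟩ := hlam
  set u : Fin p → ℂ := fun k => Fp p k i with hu
  have hFF : Fp p * (Fp p)ᴴ = 1 := mul_eq_one_comm.mp (Fp_unitary p)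
  have hC : circ p lam * Fp p = Fp p * Matrix.diagonal d := by
    calc circ p lam * Fp p = (Fp p * (Fp p)ᴴ) * (circ p lam * Fp p) := by rw [hFF, one_mul]
      _ = Fp p * ((Fp p)ᴴ * circ p lam * Fp p) := by simp only [Matrix.mul_assoc]
      _ = Fp p * Matrix.diagonal d := by rw [hd]
  have hu' : u = Fp p *ᵥ (Pi.single i 1 : Fin p → ℂ) := by
    funext k
    simp [Matrix.mulVec_single, hu]
  have hcol : circ p lam *ᵥ u = d i • u := by
    rw [hu', Matrix.mulVec_mulVec, hC, ← Matrix.mulVec_mulVec]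
    have hdiag : Matrix.diagonal d *ᵥ (Pi.single i 1 : Fin p → ℂ) = d i • (Pi.single i 1 : Fin p → ℂ) := by
      funext k
      by_cases hk : k = i <;> simp [Matrix.mulVec_single, Matrix.diagonal, hk]
    rw [hdiag, Matrix.mulVec_smul]
  refine ⟨(bcircV X).mulVec u, ?_, ?_⟩
  · intro hv0
    have h1 : circ p (xHx X) *ᵥ u = 0 := by
      rw [← bcircV_conjT_mul X, ← Matrix.mulVec_mulVec, hv0, Matrix.mulVec_zero]
    have h2 : u = 0 := by
      obtain ⟨U, hUeq⟩ := hU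
      have h3 : (↑U⁻¹ : Matrix (Fin p) (Fin p) ℂ) *ᵥ (circ p (xHx X) *ᵥ u) = u := by
        rw [Matrix.mulVec_mulVec, ← hUeq, Units.inv_mul, Matrix.one_mulVec]
      rw [h1, Matrix.mulVec_zero] at h3
      exact h3.symm
    have h4 : u ⟨0, hp⟩ = 0 := congrFun h2 ⟨0, hp⟩
    have h5 : u ⟨0, hp⟩ = 1 / (Real.sqrt p : ℂ) := by
      simp [hu, Fp]
    rw [h5] at h4
    have h6 : (Real.sqrt p : ℂ) ≠ 0 := by
      simp only [ne_eq, Complex.ofReal_eq_zero]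
      positivity
    exact (div_ne_zero one_ne_zero h6) h4
  · rw [Matrix.mulVec_mulVec, bcirc_mul_bcircV A lam X hX, ← Matrix.mulVec_mulVec, hcol,
      Matrix.mulVec_smul]
end

section
/- Every Hermitian tensor 𝒜 ∈ ℂ^{n×n×p} admits a T-eigendecomposition 𝒜 = 𝒬^H * 𝒟 * 𝒬 with 𝒬 unitary (𝒬^H*𝒬 = ℐ) and 𝒟 F-diagonal; equivalently, bcirc(𝒜) = bcirc(𝒬)^H bcirc(𝒟) bcirc(𝒬) where bcirc(𝒬) is unitary and the blocks of the block-diagonalized bcirc(𝒟) are diagonal. -/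
open Matrix Complex Finset Kronecker
open scoped ComplexOrder

section TensorDFT

variable (p : ℕ) [NeZero p]

noncomputable def zet : ℂ := Complex.exp (2 * Real.pi * Complex.I / p)

lemma zet_prim : IsPrimitiveRoot (zet p) p :=
  Complex.isPrimitiveRoot_exp p (NeZero.ne p)

lemma zet_pow_p : zet p ^ p = 1 := (zet_prim p).pow_eq_one

lemma zet_pow_mod (x : ℕ) : zet p ^ (x % p) = zet p ^ x := by
  conv_rhs => rw [← Nat.div_add_mod x p]
  rw [pow_add, pow_mul, zet_pow_p, one_pow, one_mul]

noncomputable def ep (s : Fin p) : ℂ := zet p ^ s.val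

variable {p}

lemma ep_zero : ep p 0 = 1 := by simp [ep]

lemma ep_add (a b : Fin p) : ep p (a + b) = ep p a * ep p b := by
  rw [ep, ep, ep, ← pow_add, Fin.val_add, zet_pow_mod]

lemma ep_neg_mul (s : Fin p) : ep p (-s) * ep p s = 1 := by
  rw [← ep_add, neg_add_cancel, ep_zero]

lemma star_ep (s : Fin p) : star (ep p s) = ep p (-s) := by
  have h1 : star (zet p) = (zet p)⁻¹ := by
    rw [zet, ← Complex.exp_neg]
    rw [show star (Complex.exp (2 * Real.pi * Complex.I / p)) =
        (starRingEnd ℂ) (Complex.exp (2 * Real.pi * Complex.I / p)) from rfl]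
    rw [← Complex.exp_conj]
    congr 1
    simp [map_div₀, Complex.conj_I, map_ofNat, Complex.conj_ofReal]
    ring
  have h2 : ep p (-s) = (ep p s)⁻¹ := eq_inv_of_mul_eq_one_left (ep_neg_mul s)
  rw [h2]
  simp only [ep]
  rw [star_pow, h1, inv_pow]

lemma ep_mul_eq (j s : Fin p) : ep p (j * s) = (zet p ^ s.val) ^ j.val := by
  simp only [ep]
  rw [Fin.val_mul, zet_pow_mod, ← pow_mul, mul_comm s.val j.val, pow_mul]

lemma orth (s : Fin p) : ∑ j : Fin p, ep p (j * s) = if s = 0 then (p : ℂ) else 0 := by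
  by_cases hs : s = 0
  · subst hs; simp [mul_zero, ep_zero]
  · simp only [hs, if_false, ep_mul_eq]
    rw [Fin.sum_univ_eq_sum_range (fun k => (zet p ^ s.val) ^ k) p]
    have hx1 : zet p ^ s.val ≠ 1 := by
      refine (zet_prim p).pow_ne_one_of_pos_of_lt ?_ s.isLt
      exact (fun h => hs (Fin.ext h))
    rw [geom_sum_eq hx1]
    rw [← pow_mul, mul_comm s.val p, pow_mul, zet_pow_p, one_pow]
    simp

end TensorDFT

noncomputable def hatT {p a b : ℕ} [NeZero p] (X : Fin p → Matrix (Fin a) (Fin b) ℂ) :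
    Fin p → Matrix (Fin a) (Fin b) ℂ := fun j => ∑ t, ep p (j * t) • X t

noncomputable def ihatT {p a b : ℕ} [NeZero p] (X : Fin p → Matrix (Fin a) (Fin b) ℂ) :
    Fin p → Matrix (Fin a) (Fin b) ℂ :=
  fun t => (p : ℂ)⁻¹ • ∑ j, ep p (-(j * t)) • X j

section lemmas
variable {p a b c : ℕ} [NeZero p]

lemma ihatT_hatT (X : Fin p → Matrix (Fin a) (Fin b) ℂ) : ihatT (hatT X) = X := by
  funext t
  have key : ∑ j : Fin p, ep p (-(j * t)) • hatT X j = (p : ℂ) • X t := by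
    calc ∑ j : Fin p, ep p (-(j * t)) • ∑ s, ep p (j * s) • X s
        = ∑ j : Fin p, ∑ s, (ep p (j * s) * ep p (-(j * t))) • X s := by
          refine Finset.sum_congr rfl fun j _ => ?_
          rw [Finset.smul_sum]
          refine Finset.sum_congr rfl fun s _ => ?_
          rw [smul_smul, mul_comm]
      _ = ∑ s : Fin p, (∑ j : Fin p, ep p (j * (s - t))) • X s := by
          rw [Finset.sum_comm]
          refine Finset.sum_congr rfl fun s _ => ?_
          rw [Finset.sum_smul]
          refine Finset.sum_congr rfl fun j _ => ?_
          congr 1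
          rw [← ep_add]
          congr 1
          open Fin.CommRing in ring
      _ = ∑ s : Fin p, if s = t then (p : ℂ) • X s else 0 := by
          refine Finset.sum_congr rfl fun s _ => ?_
          rw [orth]
          rcases eq_or_ne s t with h | h
          · simp [h]
          · simp [h, sub_ne_zero.mpr h]
      _ = (p : ℂ) • X t := by rw [Finset.sum_ite_eq' Finset.univ t]; simp
  show (p : ℂ)⁻¹ • ∑ j : Fin p, ep p (-(j * t)) • hatT X j = X t
  rw [key, smul_smul, inv_mul_cancel₀ (Nat.cast_ne_zero.mpr (NeZero.ne p)), one_smul]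

lemma hatT_ihatT (X : Fin p → Matrix (Fin a) (Fin b) ℂ) : hatT (ihatT X) = X := by
  funext j
  show ∑ t : Fin p, ep p (j * t) • ((p : ℂ)⁻¹ • ∑ k, ep p (-(k * t)) • X k) = X j
  have key : ∑ t : Fin p, ep p (j * t) • ∑ k, ep p (-(k * t)) • X k = (p : ℂ) • X j := by
    calc ∑ t : Fin p, ep p (j * t) • ∑ k, ep p (-(k * t)) • X k
        = ∑ t : Fin p, ∑ k, (ep p (t * (j - k))) • X k := by
          refine Finset.sum_congr rfl fun t _ => ?_
          rw [Finset.smul_sum]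
          refine Finset.sum_congr rfl fun k _ => ?_
          rw [smul_smul]
          congr 1
          rw [← ep_add]
          congr 1
          open Fin.CommRing in ring
      _ = ∑ k : Fin p, (∑ t : Fin p, ep p (t * (j - k))) • X k := by
          rw [Finset.sum_comm]
          refine Finset.sum_congr rfl fun k _ => ?_
          rw [Finset.sum_smul]
      _ = ∑ k : Fin p, if k = j then (p : ℂ) • X k else 0 := by
          refine Finset.sum_congr rfl fun k _ => ?_
          rw [orth]
          rcases eq_or_ne k j with h | h
          · simp [h]
          · simp [h, sub_ne_zero.mpr (Ne.symm h)]
      _ = (p : ℂ) • X j := by rw [Finset.sum_ite_eq' Finset.univ j]; simp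
  calc ∑ t : Fin p, ep p (j * t) • ((p : ℂ)⁻¹ • ∑ k, ep p (-(k * t)) • X k)
      = (p : ℂ)⁻¹ • ∑ t : Fin p, ep p (j * t) • ∑ k, ep p (-(k * t)) • X k := by
        rw [Finset.smul_sum]
        refine Finset.sum_congr rfl fun t _ => ?_
        rw [smul_comm]
    _ = X j := by
        rw [key, smul_smul, inv_mul_cancel₀ (Nat.cast_ne_zero.mpr (NeZero.ne p)), one_smul]

lemma hatT_injective {X Y : Fin p → Matrix (Fin a) (Fin b) ℂ}
    (h : hatT X = hatT Y) : X = Y := by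
  rw [← ihatT_hatT X, h, ihatT_hatT]

lemma hatT_tmul (A : Fin p → Matrix (Fin a) (Fin b) ℂ)
    (B : Fin p → Matrix (Fin b) (Fin c) ℂ) (j : Fin p) :
    hatT (tmul A B) j = hatT A j * hatT B j := by
  show ∑ i : Fin p, ep p (j * i) • ∑ t, A (i - t) * B t
      = (∑ i : Fin p, ep p (j * i) • A i) * (∑ t : Fin p, ep p (j * t) • B t)
  have hrhs : (∑ i : Fin p, ep p (j * i) • A i) * (∑ t : Fin p, ep p (j * t) • B t)
      = ∑ i : Fin p, ∑ t : Fin p, (ep p (j * i) • A i) * (ep p (j * t) • B t) := by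
    rw [Matrix.sum_mul]
    exact Finset.sum_congr rfl fun i _ => Matrix.mul_sum _ _ _
  rw [hrhs]
  calc ∑ i : Fin p, ep p (j * i) • ∑ t, A (i - t) * B t
      = ∑ i : Fin p, ∑ t, ep p (j * i) • (A (i - t) * B t) := by
        refine Finset.sum_congr rfl fun i _ => ?_
        rw [Finset.smul_sum]
    _ = ∑ t : Fin p, ∑ i : Fin p, ep p (j * i) • (A (i - t) * B t) := Finset.sum_comm
    _ = ∑ t : Fin p, ∑ i : Fin p, ep p (j * (i + t)) • (A i * B t) := by
        refine Finset.sum_congr rfl fun t _ => ?_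
        refine (Fintype.sum_equiv (Equiv.addRight t)
          (fun i => ep p (j * (i + t)) • (A i * B t))
          (fun i => ep p (j * i) • (A (i - t) * B t)) (fun i => ?_)).symm
        simp
    _ = ∑ i : Fin p, ∑ t : Fin p, (ep p (j * i) • A i) * (ep p (j * t) • B t) := by
        rw [Finset.sum_comm]
        refine Finset.sum_congr rfl fun i _ => Finset.sum_congr rfl fun t _ => ?_
        rw [Matrix.smul_mul, Matrix.mul_smul, smul_smul, ← ep_add, ← mul_add]

lemma hatT_tH (X : Fin p → Matrix (Fin a) (Fin b) ℂ) (j : Fin p) :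
    hatT (tH X) j = (hatT X j)ᴴ := by
  show ∑ i : Fin p, ep p (j * i) • (X (-i))ᴴ = (∑ t : Fin p, ep p (j * t) • X t)ᴴ
  rw [Matrix.conjTranspose_sum]
  refine Fintype.sum_equiv (Equiv.neg (Fin p))
    (fun i => ep p (j * i) • (X (-i))ᴴ)
    (fun t => (ep p (j * t) • X t)ᴴ) (fun i => ?_)
  simp only [Equiv.neg_apply, Matrix.conjTranspose_smul, star_ep, mul_neg, neg_neg]

lemma hatT_tId (j : Fin p) : hatT (tId a p) j = 1 := by
  show ∑ t : Fin p, ep p (j * t) • (if t = 0 then (1 : Matrix (Fin a) (Fin a) ℂ) else 0) = 1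
  rw [Finset.sum_eq_single 0]
  · simp [ep_zero]
  · intro t _ ht; simp [ht]
  · simp

end lemmas

/-- every Hermitian tensor admits a T-eigendecomposition
`𝒜 = 𝒬ᴴ * 𝒟 * 𝒬` with `𝒬` unitary and `𝒟` F-diagonal. -/
theorem hermitian_T_eigendecomposition (n p : ℕ) [NeZero p]
    (A : Fin p → Matrix (Fin n) (Fin n) ℂ) (hA : (bcirc A).IsHermitian) :
    ∃ Q D : Fin p → Matrix (Fin n) (Fin n) ℂ,
      tmul (tH Q) Q = tId n p ∧ tmul Q (tH Q) = tId n p ∧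
      (∀ i, (D i).IsDiag) ∧ A = tmul (tH Q) (tmul D Q) := by
  -- symmetry of slices
  have hsym : tH A = A := by
    funext i
    ext r c
    have h := congrFun (congrFun hA.eq (i, r)) ((0 : Fin p), c)
    simp only [Matrix.conjTranspose_apply, bcirc, Matrix.of_apply, sub_zero, zero_sub] at h
    simpa [tH, Matrix.conjTranspose_apply] using h
  have hherm : ∀ j, (hatT A j).IsHermitian := by
    intro j
    show (hatT A j)ᴴ = hatT A j
    rw [← hatT_tH, hsym]
  set U : Fin p → Matrix (Fin n) (Fin n) ℂ :=
    fun j => ((hherm j).eigenvectorUnitary : Matrix (Fin n) (Fin n) ℂ) with hU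
  set Qh : Fin p → Matrix (Fin n) (Fin n) ℂ := fun j => (U j)ᴴ with hQh
  set Dh : Fin p → Matrix (Fin n) (Fin n) ℂ :=
    fun j => Matrix.diagonal (RCLike.ofReal ∘ (hherm j).eigenvalues) with hDh
  have hq : hatT (ihatT Qh) = Qh := hatT_ihatT Qh
  have hd : hatT (ihatT Dh) = Dh := hatT_ihatT Dh
  have hUU : ∀ j, U j * (U j)ᴴ = 1 := fun j => by
    rw [← Matrix.star_eq_conjTranspose]
    exact Matrix.mem_unitaryGroup_iff.mp ((hherm j).eigenvectorUnitary).2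
  have hUU' : ∀ j, (U j)ᴴ * U j = 1 := fun j => by
    rw [← Matrix.star_eq_conjTranspose]
    exact Matrix.mem_unitaryGroup_iff'.mp ((hherm j).eigenvectorUnitary).2
  refine ⟨ihatT Qh, ihatT Dh, ?_, ?_, ?_, ?_⟩
  · apply hatT_injective
    funext j
    rw [hatT_tmul, hatT_tH, hq, hatT_tId, hQh]
    simpa using hUU j
  · apply hatT_injective
    funext j
    rw [hatT_tmul, hatT_tH, hq, hatT_tId, hQh]
    simpa using hUU' j
  · intro i r c hrc
    show ihatT Dh i r c = 0
    simp [ihatT, Matrix.sum_apply, hDh, Matrix.diagonal_apply_ne _ hrc]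
  · apply hatT_injective
    funext j
    rw [hatT_tmul, hatT_tH, hatT_tmul, hq, hd, ← mul_assoc]
    have := (hherm j).spectral_theorem
    rw [← Matrix.star_eq_conjTranspose] at *
    calc hatT A j = U j * Matrix.diagonal (RCLike.ofReal ∘ (hherm j).eigenvalues) * star (U j) := this
      _ = (Qh j)ᴴ * Dh j * Qh j := by rw [hQh, hDh, Matrix.star_eq_conjTranspose, Matrix.conjTranspose_conjTranspose]
end

section
/- Let ([a_ℓ]) be a sequence of tubular tensors of length p and [w] a Hermitian positive definite tubular tensor with [w] ≺ [e_1] (strictly less than the tubular identity in the Loewner-type order). If [a_ℓ]^H * [a_ℓ] ⪯ [w] * [a_{ℓ-1}]^H * [a_{ℓ-1}] for all ℓ ≥ 1, then [a_ℓ] → 0 as ℓ → ∞ (each frontal slice tends to zero). -/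
open Matrix Complex Finset Kronecker
open scoped ComplexOrder

/-!
Write `W = circ(w)` and `M_ℓ = circ(a_ℓ)ᴴ circ(a_ℓ)`. Since `1 - W` is positive definite,
`W ⪯ ω • 1` for some `0 ≤ ω < 1`, and then `tr (W M) ≤ ω tr M` for every `M = Bᴴ B`. Taking
traces in the recursion gives `tr M_{ℓ+1} ≤ ω tr M_ℓ`, so `tr M_ℓ`, the sum of the squared moduli
of the entries of `circ(a_ℓ)`, decays geometrically; every entry of `a_ℓ` is such an entry.
-/

open Filter Topology

namespace Matrix
variable {𝕜 m n : Type*} [RCLike 𝕜] [Fintype m] [Fintype n]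

open scoped MatrixOrder in
lemma PosDef.exists_pos_smul_one_le [DecidableEq n] [Nonempty n] {A : Matrix n n 𝕜}
    (hA : A.PosDef) : ∃ ε > (0 : ℝ), (A - ε • 1).PosSemidef := by
  obtain ⟨ε, hε, hle⟩ := (CFC.exists_pos_algebraMap_le_iff hA.isHermitian.isSelfAdjoint).2
    fun x hx => hA.isStrictlyPositive.spectrum_pos hx
  exact ⟨ε, hε, by rwa [Algebra.algebraMap_eq_smul_one, le_iff] at hle⟩

lemma exists_le_smul_one_of_posDef_one_sub [DecidableEq n] [Nonempty n] {W : Matrix n n 𝕜}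
    (hW : (1 - W).PosDef) : ∃ ω : ℝ, 0 ≤ ω ∧ ω < 1 ∧ (ω • 1 - W).PosSemidef := by
  obtain ⟨ε, hε, hle⟩ := hW.exists_pos_smul_one_le
  refine ⟨max (1 - ε) 0, le_max_right _ _, max_lt (by linarith) one_pos, ?_⟩
  have hsplit : max (1 - ε) 0 • 1 - W = (1 - W - ε • 1) + (max (1 - ε) 0 - (1 - ε)) • 1 := by
    rw [sub_smul, sub_smul, one_smul]; abel
  rw [hsplit]
  exact hle.add (PosSemidef.one.smul (sub_nonneg.2 (le_max_left _ _)))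

lemma re_trace_conjTranspose_mul_self (B : Matrix m n 𝕜) :
    RCLike.re (Bᴴ * B).trace = ∑ j, ∑ i, ‖B i j‖ ^ 2 := by
  simp only [trace, diag_apply, mul_apply, conjTranspose_apply, RCLike.star_def, RCLike.conj_mul,
    map_sum]
  norm_cast

lemma norm_apply_le_sqrt_re_trace_conjTranspose_mul_self (B : Matrix m n 𝕜) (i : m) (j : n) :
    ‖B i j‖ ≤ √(RCLike.re (Bᴴ * B).trace) := by
  rw [re_trace_conjTranspose_mul_self, Real.le_sqrt (norm_nonneg _) (by positivity)]
  exact (Finset.single_le_sum (fun i _ => sq_nonneg ‖B i j‖) (Finset.mem_univ i)).trans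
    (Finset.single_le_sum (f := fun j => ∑ i, ‖B i j‖ ^ 2)
      (fun j _ => Finset.sum_nonneg fun i _ => sq_nonneg _) (Finset.mem_univ j))

lemma re_trace_mul_conjTranspose_mul_self_le [DecidableEq n] {W : Matrix n n 𝕜} {ω : ℝ}
    (hW : (ω • 1 - W).PosSemidef) (B : Matrix m n 𝕜) :
    RCLike.re (W * (Bᴴ * B)).trace ≤ ω * RCLike.re (Bᴴ * B).trace := by
  have h := (hW.mul_mul_conjTranspose_same B).trace_nonneg
  rw [trace_mul_cycle, trace_mul_comm, sub_mul, smul_mul, Matrix.one_mul, trace_sub, trace_smul,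
    sub_nonneg] at h
  simpa only [RCLike.smul_re] using RCLike.re_le_re h

theorem tendsto_zero_of_conjTranspose_mul_self_le_mul [DecidableEq n] [Nonempty n]
    {W : Matrix n n 𝕜} (hW : (1 - W).PosDef) {B : ℕ → Matrix m n 𝕜}
    (hB : ∀ ℓ, (W * ((B ℓ)ᴴ * B ℓ) - (B (ℓ + 1))ᴴ * B (ℓ + 1)).PosSemidef) :
    Tendsto B atTop (𝓝 0) := by
  obtain ⟨ω, hω0, hω1, hWω⟩ := exists_le_smul_one_of_posDef_one_sub hW
  set f : ℕ → ℝ := fun ℓ => RCLike.re ((B ℓ)ᴴ * B ℓ).trace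
  have hstep (ℓ : ℕ) : f (ℓ + 1) ≤ ω * f ℓ := by
    have h := (hB ℓ).trace_nonneg
    rw [trace_sub, sub_nonneg] at h
    exact (RCLike.re_le_re h).trans (re_trace_mul_conjTranspose_mul_self_le hWω (B ℓ))
  have hf_tendsto : Tendsto f atTop (𝓝 0) := by
    refine squeeze_zero (fun ℓ => ?_) (fun ℓ => le_geom hω0 ℓ fun k _ => hstep k) ?_
    · exact (RCLike.nonneg_iff.1 (posSemidef_conjTranspose_mul_self _).trace_nonneg).1
    · simpa using (tendsto_pow_atTop_nhds_zero_of_lt_one hω0 hω1).mul_const (f 0)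
  refine tendsto_pi_nhds.2 fun i => tendsto_pi_nhds.2 fun j => ?_
  exact squeeze_zero_norm (fun ℓ => norm_apply_le_sqrt_re_trace_conjTranspose_mul_self (B ℓ) i j)
    (by simpa using hf_tendsto.sqrt)

end Matrix

lemma circ_ite_zero_eq_one (p : ℕ) [NeZero p] :
    circ p (fun i => if i = 0 then 1 else 0) = 1 := by
  ext j k
  simp [circ, Matrix.one_apply, sub_eq_zero]

theorem tubular_contraction_tendsto_zero_general (p : ℕ) [NeZero p]
    (a : ℕ → Fin p → ℂ) (w : Fin p → ℂ)
    (hw1 : (circ p (fun i => if i = 0 then 1 else 0) - circ p w).PosDef)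
    (hrec : ∀ ℓ : ℕ,
      (circ p w * ((circ p (a ℓ))ᴴ * circ p (a ℓ))
        - (circ p (a (ℓ + 1)))ᴴ * circ p (a (ℓ + 1))).PosSemidef) :
    ∀ i, Filter.Tendsto (fun ℓ => a ℓ i) Filter.atTop (nhds 0) := by
  rw [circ_ite_zero_eq_one] at hw1
  have hcirc := Matrix.tendsto_zero_of_conjTranspose_mul_self_le_mul hw1 hrec
  intro i
  simpa [circ] using tendsto_pi_nhds.1 (tendsto_pi_nhds.1 hcirc i) 0

/-- a tubular contraction sequence tends to zero: if
`[a_ℓ]ᴴ*[a_ℓ] ⪯ [w]*[a_{ℓ-1}]ᴴ*[a_{ℓ-1}]` with `[w]` Hermitian positive definite and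
`[w] ≺ [e₁]`, then every frontal slice of `[a_ℓ]` tends to zero. -/
theorem tubular_contraction_tendsto_zero (p : ℕ) [NeZero p]
    (a : ℕ → Fin p → ℂ) (w : Fin p → ℂ)
    (hw : (circ p w).PosDef)
    (hw1 : (circ p (fun i => if i = 0 then 1 else 0) - circ p w).PosDef)
    (hrec : ∀ ℓ : ℕ,
      (circ p w * ((circ p (a ℓ))ᴴ * circ p (a ℓ))
        - (circ p (a (ℓ + 1)))ᴴ * circ p (a (ℓ + 1))).PosSemidef) :
    ∀ i, Filter.Tendsto (fun ℓ => a ℓ i) Filter.atTop (nhds 0) :=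
  tubular_contraction_tendsto_zero_general p a w hw1 hrec
end
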